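/- If γ : ℝ^d → ℝ is a variogram, then for every a > 0 the function ξ ↦ 1 − exp(−a·γ(ξ)) is also a variogram. -/

import Mathlib

open Finset Real

def IsVariogram {d : ℕ} (γ : (Fin d → ℝ) → ℝ) : Prop :=
  γ 0 = 0 ∧ (∀ ξ, γ (-ξ) = γ ξ) ∧
  ∀ (n : ℕ) (x : Fin n → (Fin d → ℝ)) (c : Fin n → ℝ),
    (∑ i, c i) = 0 → (∑ i, ∑ j, c i * c j * γ (x i - x j)) ≤ 0

def IsPosDef {d : ℕ} (f : (Fin d → ℝ) → ℝ) : Prop :=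
  ∀ (n : ℕ) (x : Fin n → (Fin d → ℝ)) (c : Fin n → ℝ),
    0 ≤ ∑ i, ∑ j, c i * c j * f (x i - x j)

def IsPosDef1 (f : ℝ → ℝ) : Prop :=
  ∀ (n : ℕ) (x : Fin n → ℝ) (c : Fin n → ℝ),
    0 ≤ ∑ i, ∑ j, c i * c j * f (x i - x j)

def IsVariogram1 (γ : ℝ → ℝ) : Prop :=
  γ 0 = 0 ∧ (∀ x, γ (-x) = γ x) ∧
  ∀ (n : ℕ) (x : Fin n → ℝ) (c : Fin n → ℝ),
    (∑ i, c i) = 0 → (∑ i, ∑ j, c i * c j * γ (x i - x j)) ≤ 0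

noncomputable def ind {d : ℕ} : (Fin d → ℝ) → ℝ := fun ξ => if ξ = 0 then 0 else 1


/-! Schoenberg's argument. For points `x i`, the matrix `K i j = γ (x i) + γ (x j) - γ (x i - x j)`
is positive semidefinite: its quadratic form at `c` is minus the variogram form at the points
`x i, 0` with the balanced weights `c i, -∑ c`. By the Schur product theorem all Hadamard powers
of `a K` are positive semidefinite, hence so is its entrywise exponential, and
`exp (-a γ (x i - x j))` is that matrix conjugated by the diagonal `exp (-a γ (x i))`. So
`exp (-a γ)` is positive definite, and `f 0 - f` is a variogram for every even positive
definite `f`. -/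
namespace Matrix

variable {ι : Type*}

theorem PosSemidef.map_pow [Finite ι] {A : Matrix ι ι ℝ} (hA : A.PosSemidef) (k : ℕ) :
    (A.map (· ^ k)).PosSemidef := by
  induction k with
  | zero =>
    have hones : A.map (· ^ 0) = vecMulVec 1 (star 1) := by ext; simp
    exact hones ▸ posSemidef_vecMulVec_self_star 1
  | succ k ih =>
    have hsucc : A.map (· ^ (k + 1)) = A.map (· ^ k) ⊙ A := by ext; simp [pow_succ]
    exact hsucc ▸ ih.hadamard hA

theorem posSemidef_iff_sum_sum_mul_mul_nonneg [Fintype ι] {M : Matrix ι ι ℝ} :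
    M.PosSemidef ↔ M.IsHermitian ∧ ∀ c : ι → ℝ, 0 ≤ ∑ i, ∑ j, c i * c j * M i j := by
  have hform (c : ι → ℝ) : star c ⬝ᵥ (M *ᵥ c) = ∑ i, ∑ j, c i * c j * M i j := by
    simp only [star_trivial, dotProduct, mulVec, Finset.mul_sum]
    exact Finset.sum_congr rfl fun i _ => Finset.sum_congr rfl fun j _ => by ring
  simp only [posSemidef_iff_dotProduct_mulVec, hform]

theorem PosSemidef.map_exp [Fintype ι] {A : Matrix ι ι ℝ} (hA : A.PosSemidef) :
    (A.map Real.exp).PosSemidef := by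
  refine .of_dotProduct_mulVec_nonneg (hA.isHermitian.map _ fun _ => rfl) fun c => ?_
  have hseries (t : ℝ) : HasSum (fun k => t ^ k / k.factorial) (Real.exp t) := by
    simpa only [Real.exp_eq_exp_ℝ] using NormedSpace.expSeries_div_hasSum_exp t
  have hform : HasSum (fun k => star c ⬝ᵥ (A.map (· ^ k) *ᵥ c) / k.factorial)
      (star c ⬝ᵥ (A.map Real.exp *ᵥ c)) := by
    simp only [dotProduct, mulVec, map_apply, Finset.mul_sum, Finset.sum_div]
    refine hasSum_sum fun i _ => hasSum_sum fun j _ => ?_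
    have hij := ((hseries (A i j)).mul_right (c j)).mul_left (star c i)
    simp only [div_mul_eq_mul_div, mul_div_assoc'] at hij
    exact hij
  exact hform.nonneg fun k =>
    div_nonneg ((hA.map_pow k).dotProduct_mulVec_nonneg c) (Nat.cast_nonneg _)

end Matrix

theorem IsVariogram.sum_sum_mul_mul_le {d n : ℕ} {γ : (Fin d → ℝ) → ℝ} (hγ : IsVariogram γ)
    (x : Fin n → Fin d → ℝ) (c : Fin n → ℝ) :
    ∑ i, ∑ j, c i * c j * γ (x i - x j) ≤ 2 * (∑ i, c i) * ∑ i, c i * γ (x i) := by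
  obtain ⟨hzero, heven, hcnd⟩ := hγ
  set s := ∑ i, c i
  -- append the point `0` with weight `-s`, which balances the coefficients
  have hbal : ∑ i, Fin.snoc c (-s) i = 0 := by simp [Fin.sum_univ_castSucc, s]
  have h := hcnd (n + 1) (Fin.snoc x 0) _ hbal
  simp only [Fin.sum_univ_castSucc, Fin.snoc_castSucc, Fin.snoc_last, sub_zero, zero_sub, heven,
    hzero, mul_zero, add_zero, Finset.sum_add_distrib] at h
  have hcross : ∑ i, -s * c i * γ (x i) + ∑ i, c i * -s * γ (x i)
      = -2 * s * ∑ i, c i * γ (x i) := by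
    rw [← Finset.sum_add_distrib, Finset.mul_sum]
    exact Finset.sum_congr rfl fun i _ => by ring
  linarith

/-- Up to a factor `2`, the covariance matrix of the increments `Z (x i) - Z 0` of a random field
`Z` with variogram `γ`. -/
theorem IsVariogram.posSemidef_covariance {d n : ℕ} {γ : (Fin d → ℝ) → ℝ} (hγ : IsVariogram γ)
    (x : Fin n → Fin d → ℝ) :
    (Matrix.of fun i j => γ (x i) + γ (x j) - γ (x i - x j)).PosSemidef := by
  have hsub (i j : Fin n) : γ (x j - x i) = γ (x i - x j) := by rw [← neg_sub, hγ.2.1]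
  refine Matrix.posSemidef_iff_sum_sum_mul_mul_nonneg.mpr ⟨?_, fun c => ?_⟩
  · ext i j
    simp only [Matrix.conjTranspose_apply, Matrix.of_apply, star_trivial, hsub]
    ring
  · have hexpand (i j : Fin n) : c i * c j * (γ (x i) + γ (x j) - γ (x i - x j))
        = c i * γ (x i) * c j + c i * (c j * γ (x j)) - c i * c j * γ (x i - x j) := by ring
    simp only [Matrix.of_apply, hexpand, Finset.sum_add_distrib, Finset.sum_sub_distrib,
      ← Finset.sum_mul_sum]
    linarith [hγ.sum_sum_mul_mul_le x c]

theorem IsVariogram.isPosDef_exp_neg_mul {d : ℕ} {γ : (Fin d → ℝ) → ℝ} (hγ : IsVariogram γ)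
    {a : ℝ} (ha : 0 ≤ a) : IsPosDef fun ξ => Real.exp (-a * γ ξ) := by
  intro n x c
  set e : Fin n → ℝ := fun i => Real.exp (-a * γ (x i))
  -- `exp (-a γ (x i - x j)) = e i * exp (a K i j) * e j` with `K` the covariance matrix
  have hM := ((hγ.posSemidef_covariance x).smul ha).map_exp.mul_mul_conjTranspose_same
    (Matrix.diagonal e)
  convert (Matrix.posSemidef_iff_sum_sum_mul_mul_nonneg.mp hM).2 c using 5 with i _ j _
  simp only [Matrix.diagonal_conjTranspose, Matrix.diagonal_mul, Matrix.mul_diagonal, star_trivial,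
    Matrix.map_apply, Matrix.smul_apply, Matrix.of_apply, smul_eq_mul, e, ← Real.exp_add]
  congr 1
  ring

theorem isVariogram_sub_of_isPosDef {d : ℕ} {f : (Fin d → ℝ) → ℝ} (hf : ∀ ξ, f (-ξ) = f ξ)
    (hpd : IsPosDef f) : IsVariogram fun ξ => f 0 - f ξ := by
  refine ⟨sub_self _, fun ξ => by simp only [hf], fun n x c hc => ?_⟩
  have hsplit : ∑ i, ∑ j, c i * c j * (f 0 - f (x i - x j))
      = f 0 * (∑ i, c i) ^ 2 - ∑ i, ∑ j, c i * c j * f (x i - x j) := by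
    simp only [mul_sub, Finset.sum_sub_distrib, sq, Finset.sum_mul, Finset.mul_sum]
    congr 1
    exact Finset.sum_congr rfl fun i _ => Finset.sum_congr rfl fun j _ => by ring
  rw [hsplit, hc]
  linarith [hpd n x c]

theorem stmt8 {d : ℕ} (γ : (Fin d → ℝ) → ℝ) (h : IsVariogram γ)
    (a : ℝ) (ha : 0 < a) :
    IsVariogram (fun ξ => 1 - Real.exp (-a * γ ξ)) := by
  have hvar := isVariogram_sub_of_isPosDef (fun ξ => by rw [h.2.1 ξ]) (h.isPosDef_exp_neg_mul ha.le)
  simpa only [h.1, mul_zero, Real.exp_zero] using hvar
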